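/- Let n ≥ 2 be an integer and ν > 0, and let g_ν(s) = C(ν,n)·(1+s/ν)^{-(n+ν)/2} be the n-dimensional Student-t generator. Then for every s ∈ ℝ, the n-dimensional tail function reduces to the one-dimensional Student-t tail: G[g_ν](s) = ∫_{-∞}^{-s} (Γ((ν+1)/2)/(Γ(ν/2)·√(νπ))) · (1 + t²/ν)^{-(ν+1)/2} dt. In particular G[g_ν](s) does not depend on n. -/

import Mathlib

open MeasureTheory Matrix Set

/-- The half-space tail function `G[g](s)` for an elliptic generator `g` in dimension `n`. -/
noncomputable def Gfun (n : ℕ) (g : ℝ → ℝ) (s : ℝ) : ℝ :=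
  (2 * Real.pi ^ (((n : ℝ) - 1) / 2) / Real.Gamma (((n : ℝ) - 1) / 2)) *
    ∫ r in Ioi (0 : ℝ), r ^ ((n : ℝ) - 2) * ∫ z in Iio (-s), g (z ^ 2 + r ^ 2)

/-- The normalizing constant `C(ν,n) = Γ((ν+n)/2)/(Γ(ν/2)·√((νπ)ⁿ))`. -/
noncomputable def studentC (ν : ℝ) (n : ℕ) : ℝ :=
  Real.Gamma ((ν + n) / 2) / (Real.Gamma (ν / 2) * Real.sqrt ((ν * Real.pi) ^ n))

/-- The `n`-dimensional Student-t generator with `ν` degrees of freedom. -/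
noncomputable def studentG (ν : ℝ) (n : ℕ) (s : ℝ) : ℝ :=
  studentC ν n * (1 + s / ν) ^ (-(((n : ℝ) + ν) / 2))
/-!
Since `1 + x / ν = (ν + x) / ν`, the generator at `z² + r²` is a multiple of
`(ν + z² + r²) ^ (-(n + ν) / 2)`. Scaling `r` by `√(ν + z²)` and substituting `t = r²`, then
`t = x / (1 - x)`, turns the radial integral `∫₀^∞ r^(n-2) g_ν(z² + r²) dr` into a Beta integral
times `(1 + z² / ν) ^ (-(ν + 1) / 2)`. After integrating in `r` first (Tonelli), the
`Γ((n - 1) / 2)` and `Γ((n + ν) / 2)` factors cancel against `|S_{n-2}|` and `C(ν,n)`, leaving the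
one-dimensional Student constant.
-/
open Real

theorem integral_Ioo_rpow_mul_one_sub_rpow {a b : ℝ} (ha : 0 < a) (hb : 0 < b) :
    ∫ x in Ioo (0 : ℝ) 1, x ^ (a - 1) * (1 - x) ^ (b - 1) = Gamma a * Gamma b / Gamma (a + b) := by
  have hβ : ((∫ x in Ioo (0 : ℝ) 1, x ^ (a - 1) * (1 - x) ^ (b - 1) : ℝ) : ℂ) =
      Complex.betaIntegral a b := by
    rw [Complex.betaIntegral, intervalIntegral.integral_of_le zero_le_one,
      integral_Ioc_eq_integral_Ioo]
    refine integral_complex_ofReal.symm.trans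
      (setIntegral_congr_fun measurableSet_Ioo fun x hx => ?_)
    rw [Complex.ofReal_mul, Complex.ofReal_cpow hx.1.le, Complex.ofReal_cpow (sub_pos.2 hx.2).le]
    push_cast
    ring_nf
  rw [Complex.betaIntegral_eq_Gamma_mul_div _ _ (by simpa) (by simpa), ← Complex.ofReal_add,
    Complex.Gamma_ofReal, Complex.Gamma_ofReal, Complex.Gamma_ofReal] at hβ
  exact_mod_cast hβ

theorem integral_Ioi_rpow_mul_one_add_rpow_neg {a b : ℝ} (ha : 0 < a) (hb : 0 < b) :
    ∫ t in Ioi (0 : ℝ), t ^ (a - 1) * (1 + t) ^ (-(a + b)) = Gamma a * Gamma b / Gamma (a + b) := by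
  set f : ℝ → ℝ := fun x => x / (1 - x)
  have himage : f '' Ioo 0 1 = Ioi 0 := by
    refine Subset.antisymm ?_ fun t (ht : 0 < t) => ⟨t / (1 + t), ⟨by positivity, ?_⟩, ?_⟩
    · rintro _ ⟨x, hx, rfl⟩
      exact div_pos hx.1 (sub_pos.2 hx.2)
    · rw [div_lt_one (by positivity)]; linarith
    · simp only [f]; field_simp; ring
  have hderiv : ∀ x ∈ Ioo (0 : ℝ) 1, HasDerivWithinAt f ((1 - x) ^ 2)⁻¹ (Ioo 0 1) x := by
    intro x hx
    have h1x : 1 - x ≠ 0 := (sub_pos.2 hx.2).ne'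
    refine (((hasDerivAt_id' x).div ((hasDerivAt_id' x).const_sub 1) h1x
      ).congr_deriv ?_).hasDerivWithinAt
    field_simp; ring
  have hinj : InjOn f (Ioo 0 1) := by
    intro x hx y hy hxy
    have := (sub_pos.2 hx.2).ne'
    have := (sub_pos.2 hy.2).ne'
    simp only [f] at hxy
    field_simp at hxy
    linear_combination hxy
  rw [← himage, integral_image_eq_integral_abs_deriv_smul measurableSet_Ioo hderiv hinj,
    ← integral_Ioo_rpow_mul_one_sub_rpow ha hb]
  refine setIntegral_congr_fun measurableSet_Ioo fun x hx => ?_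
  have hx1 : 0 < 1 - x := sub_pos.2 hx.2
  have h1f : 1 + f x = (1 - x)⁻¹ := by simp only [f]; field_simp; ring
  rw [smul_eq_mul, h1f, abs_of_pos (by positivity), Real.inv_rpow hx1.le, ← Real.rpow_neg hx1.le,
    neg_neg, show f x = x * (1 - x)⁻¹ from div_eq_mul_inv _ _,
    Real.mul_rpow hx.1.le (by positivity), Real.inv_rpow hx1.le, ← Real.rpow_natCast,
    ← Real.rpow_neg hx1.le, ← Real.rpow_neg hx1.le, mul_comm, mul_assoc, mul_assoc,
    ← Real.rpow_add hx1, ← Real.rpow_add hx1]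
  congr 2
  push_cast
  ring

theorem integral_Ioi_rpow_mul_one_add_sq_rpow_neg {p q : ℝ} (hp : -1 < p)
    (hq : (p + 1) / 2 < q) :
    ∫ r in Ioi (0 : ℝ), r ^ p * (1 + r ^ 2) ^ (-q) =
      Gamma ((p + 1) / 2) * Gamma (q - (p + 1) / 2) / (2 * Gamma q) := by
  have key := integral_comp_rpow_Ioi
    (fun t => t ^ ((p + 1) / 2 - 1) * (1 + t) ^ (-((p + 1) / 2 + (q - (p + 1) / 2))))
    two_ne_zero
  rw [integral_Ioi_rpow_mul_one_add_rpow_neg (by linarith) (by linarith), add_sub_cancel] at key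
  rw [mul_comm 2, ← div_div, ← key, ← integral_div]
  refine setIntegral_congr_fun measurableSet_Ioi fun x (hx : 0 < x) => ?_
  rw [smul_eq_mul, ← Real.rpow_mul hx.le, Real.rpow_two, abs_two,
    show (2 : ℝ) * ((p + 1) / 2 - 1) = p - 1 by ring]
  norm_num
  rw [Real.rpow_sub_one hx.ne']
  field_simp

theorem integral_Ioi_rpow_mul_add_sq_rpow_neg {p q a : ℝ} (hp : -1 < p) (hq : (p + 1) / 2 < q)
    (ha : 0 < a) :
    ∫ r in Ioi (0 : ℝ), r ^ p * (a + r ^ 2) ^ (-q) =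
      a ^ ((p + 1) / 2 - q) * (Gamma ((p + 1) / 2) * Gamma (q - (p + 1) / 2) / (2 * Gamma q)) := by
  have hsa : 0 < √a := Real.sqrt_pos.2 ha
  have key := integral_comp_mul_left_Ioi (fun r => r ^ p * (a + r ^ 2) ^ (-q)) 0 hsa
  rw [mul_zero, eq_inv_smul_iff₀ hsa.ne'] at key
  rw [← key, ← integral_Ioi_rpow_mul_one_add_sq_rpow_neg hp hq, smul_eq_mul, ← integral_const_mul,
    ← integral_const_mul]
  refine setIntegral_congr_fun measurableSet_Ioi fun x (hx : 0 < x) => ?_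
  have hsq : a + (√a * x) ^ 2 = a * (1 + x ^ 2) := by
    rw [mul_pow, Real.sq_sqrt ha.le]; ring
  rw [hsq, Real.mul_rpow ha.le (by positivity), Real.mul_rpow hsa.le hx.le, Real.sqrt_eq_rpow,
    ← Real.rpow_mul ha.le, mul_mul_mul_comm, ← mul_assoc, ← Real.rpow_add ha, ← Real.rpow_add ha]
  ring_nf

theorem integrableOn_Ioi_rpow_mul_add_sq_rpow_neg {p q a : ℝ} (hp : -1 < p)
    (hq : (p + 1) / 2 < q) (ha : 0 < a) :
    IntegrableOn (fun r : ℝ => r ^ p * (a + r ^ 2) ^ (-q)) (Ioi 0) := by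
  -- a non-integrable function has Bochner integral `0`, and this integral is positive
  refine .of_integral_ne_zero ?_
  rw [integral_Ioi_rpow_mul_add_sq_rpow_neg hp hq ha]
  have := Gamma_pos_of_pos (show 0 < (p + 1) / 2 by linarith)
  have := Gamma_pos_of_pos (show 0 < q - (p + 1) / 2 by linarith)
  have := Gamma_pos_of_pos (show 0 < q by linarith)
  positivity

theorem integrable_one_add_sq_div_rpow_neg {q c : ℝ} (hq : 1 / 2 < q) (hc : 0 < c) :
    Integrable fun z : ℝ => (1 + z ^ 2 / c) ^ (-q) := by
  have h := (integrable_rpow_neg_one_add_norm_sq (E := ℝ) (μ := volume) (r := 2 * q)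
    (by simp; linarith)).comp_div (Real.sqrt_pos.2 hc).ne'
  refine h.congr (ae_of_all _ fun z => ?_)
  simp only [Real.norm_eq_abs, sq_abs, div_pow, Real.sq_sqrt hc.le]
  ring_nf

theorem one_add_div_rpow_neg {ν x : ℝ} (q : ℝ) (hν : 0 < ν) (hx : 0 ≤ ν + x) :
    (1 + x / ν) ^ (-q) = ν ^ q * (ν + x) ^ (-q) := by
  rw [show 1 + x / ν = (ν + x) / ν by field_simp, Real.div_rpow hx hν.le, Real.rpow_neg hν.le,
    div_inv_eq_mul, mul_comm]

theorem Gfun_eq_integral_Iio_integral_Ioi {n : ℕ} {g : ℝ → ℝ} (s : ℝ) (hg : Measurable g)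
    (hg_nonneg : ∀ x, 0 ≤ x → 0 ≤ g x)
    (h_section : ∀ z, IntegrableOn (fun r => r ^ ((n : ℝ) - 2) * g (z ^ 2 + r ^ 2)) (Ioi 0))
    (h_marginal : IntegrableOn
      (fun z => ∫ r in Ioi (0 : ℝ), r ^ ((n : ℝ) - 2) * g (z ^ 2 + r ^ 2)) (Iio (-s))) :
    Gfun n g s = (2 * π ^ (((n : ℝ) - 1) / 2) / Gamma (((n : ℝ) - 1) / 2)) *
      ∫ z in Iio (-s), ∫ r in Ioi (0 : ℝ), r ^ ((n : ℝ) - 2) * g (z ^ 2 + r ^ 2) := by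
  set F : ℝ → ℝ → ℝ := fun r z => r ^ ((n : ℝ) - 2) * g (z ^ 2 + r ^ 2)
  have hF_nonneg : ∀ z, ∀ r ∈ Ioi (0 : ℝ), 0 ≤ F r z := fun z r (hr : 0 < r) =>
    mul_nonneg (by positivity) (hg_nonneg _ (by positivity))
  have hF : Integrable (Function.uncurry F)
      ((volume.restrict (Ioi 0)).prod (volume.restrict (Iio (-s)))) := by
    refine (integrable_prod_iff' (by fun_prop)).2 ⟨ae_of_all _ h_section, ?_⟩
    refine h_marginal.congr_fun (fun z _ => ?_) measurableSet_Iio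
    exact setIntegral_congr_fun measurableSet_Ioi fun r hr =>
      (Real.norm_of_nonneg (hF_nonneg z r hr)).symm
  rw [Gfun, ← integral_integral_swap hF]
  simp only [F, integral_const_mul]

section Student

variable {ν : ℝ} {n : ℕ}

theorem measurable_studentG : Measurable (studentG ν n) := by
  unfold studentG
  fun_prop

theorem studentC_pos (hν : 0 < ν) : 0 < studentC ν n := by
  unfold studentC
  positivity

theorem studentG_nonneg (hν : 0 < ν) {x : ℝ} (hx : 0 ≤ x) : 0 ≤ studentG ν n x := by
  unfold studentG
  have := studentC_pos (n := n) hν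
  positivity

theorem studentG_sq_add_sq (hν : 0 < ν) (z r : ℝ) :
    studentG ν n (z ^ 2 + r ^ 2) =
      studentC ν n * ν ^ (((n : ℝ) + ν) / 2) * (ν + z ^ 2 + r ^ 2) ^ (-(((n : ℝ) + ν) / 2)) := by
  rw [studentG, one_add_div_rpow_neg _ hν (by positivity), ← add_assoc, mul_assoc]

theorem integrableOn_Ioi_rpow_mul_studentG (hn : 2 ≤ n) (hν : 0 < ν) (z : ℝ) :
    IntegrableOn (fun r => r ^ ((n : ℝ) - 2) * studentG ν n (z ^ 2 + r ^ 2)) (Ioi 0) := by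
  have hn' : (2 : ℝ) ≤ n := by exact_mod_cast hn
  refine IntegrableOn.congr_fun (Integrable.const_mul
    (integrableOn_Ioi_rpow_mul_add_sq_rpow_neg (p := (n : ℝ) - 2) (q := ((n : ℝ) + ν) / 2)
      (by linarith) (by linarith) (by positivity : 0 < ν + z ^ 2))
    (studentC ν n * ν ^ (((n : ℝ) + ν) / 2))) (fun r _ => ?_) measurableSet_Ioi
  rw [studentG_sq_add_sq hν]
  ring

theorem integral_Ioi_rpow_mul_studentG (hn : 2 ≤ n) (hν : 0 < ν) (z : ℝ) :
    ∫ r in Ioi (0 : ℝ), r ^ ((n : ℝ) - 2) * studentG ν n (z ^ 2 + r ^ 2) =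
      studentC ν n * ν ^ (((n : ℝ) - 1) / 2) *
        (Gamma (((n : ℝ) - 1) / 2) * Gamma ((ν + 1) / 2) / (2 * Gamma (((n : ℝ) + ν) / 2))) *
          (1 + z ^ 2 / ν) ^ (-((ν + 1) / 2)) := by
  have hn' : (2 : ℝ) ≤ n := by exact_mod_cast hn
  simp_rw [studentG_sq_add_sq hν, mul_left_comm _ (studentC ν n * _), integral_const_mul]
  rw [integral_Ioi_rpow_mul_add_sq_rpow_neg (by linarith) (by linarith) (by positivity),
    one_add_div_rpow_neg _ hν (by positivity)]
  have hν_pow : ν ^ (((n : ℝ) + ν) / 2) = ν ^ (((n : ℝ) - 1) / 2) * ν ^ ((ν + 1) / 2) := by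
    rw [← Real.rpow_add hν]
    ring_nf
  rw [show ((n : ℝ) - 2 + 1) / 2 = ((n : ℝ) - 1) / 2 by ring,
    show ((n : ℝ) - 1) / 2 - ((n : ℝ) + ν) / 2 = -((ν + 1) / 2) by ring,
    show ((n : ℝ) + ν) / 2 - ((n : ℝ) - 1) / 2 = (ν + 1) / 2 by ring, hν_pow]
  ring

theorem integrable_integral_Ioi_rpow_mul_studentG (hn : 2 ≤ n) (hν : 0 < ν) :
    Integrable fun z => ∫ r in Ioi (0 : ℝ), r ^ ((n : ℝ) - 2) * studentG ν n (z ^ 2 + r ^ 2) := by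
  simp_rw [integral_Ioi_rpow_mul_studentG hn hν]
  exact (integrable_one_add_sq_div_rpow_neg (by linarith) hν).const_mul _

end Student

theorem sphereArea_mul_studentC_mul_beta_eq {n : ℕ} (hn : 2 ≤ n) {ν : ℝ} (hν : 0 < ν) :
    2 * π ^ (((n : ℝ) - 1) / 2) / Gamma (((n : ℝ) - 1) / 2) *
        (studentC ν n * ν ^ (((n : ℝ) - 1) / 2) *
          (Gamma (((n : ℝ) - 1) / 2) * Gamma ((ν + 1) / 2) / (2 * Gamma (((n : ℝ) + ν) / 2)))) =
      Gamma ((ν + 1) / 2) / (Gamma (ν / 2) * √(ν * π)) := by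
  have hn' : (1 : ℝ) < n := by exact_mod_cast hn
  have hνπ : 0 < ν * π := by positivity
  have hG : 0 < Gamma (((n : ℝ) - 1) / 2) := Gamma_pos_of_pos (by linarith)
  have hsqrt : √((ν * π) ^ n) = (ν * π) ^ (((n : ℝ) - 1) / 2) * √(ν * π) := by
    rw [Real.sqrt_eq_rpow, Real.sqrt_eq_rpow, ← Real.rpow_natCast, ← Real.rpow_mul hνπ.le,
      ← Real.rpow_add hνπ]
    ring_nf
  rw [studentC, hsqrt, Real.mul_rpow hν.le pi_pos.le, add_comm ν (n : ℝ)]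
  field_simp

theorem Gfun_studentG_eq_one_dim_student_tail
    (n : ℕ) (hn : 2 ≤ n) (ν : ℝ) (hν : 0 < ν) (s : ℝ) :
    Gfun n (studentG ν n) s =
      ∫ t in Iio (-s),
        (Real.Gamma ((ν + 1) / 2) / (Real.Gamma (ν / 2) * Real.sqrt (ν * Real.pi))) *
          (1 + t ^ 2 / ν) ^ (-((ν + 1) / 2)) := by
  rw [Gfun_eq_integral_Iio_integral_Ioi s measurable_studentG (fun _ => studentG_nonneg hν)
    (integrableOn_Ioi_rpow_mul_studentG hn hν)
    (integrable_integral_Ioi_rpow_mul_studentG hn hν).integrableOn]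
  simp_rw [integral_Ioi_rpow_mul_studentG hn hν, integral_const_mul]
  rw [← mul_assoc, sphereArea_mul_studentC_mul_beta_eq hn hν]
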